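/- With φ_k = det Q_k as above and φ_1 = 1, one has φ_k = (-1)^{k-1} Π_{i=0}^{k-2} (χ_i)^{k-1-i} for all k ≥ 2. -/
import Mathlib


open Matrix Polynomial

/-- `J_k = diag(1,0,...,0)` of order `2^k`. -/
noncomputable def Jmat (k : ℕ) : Matrix (Fin (2 ^ k)) (Fin (2 ^ k)) ℝ :=
  Matrix.diagonal (fun i => if (i : ℕ) = 0 then 1 else 0)

/-- `J_k' = diag(0,...,0,1)` of order `2^k`. -/
noncomputable def Jmat' (k : ℕ) : Matrix (Fin (2 ^ k)) (Fin (2 ^ k)) ℝ :=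
  Matrix.diagonal (fun i => if (i : ℕ) = 2 ^ k - 1 then 1 else 0)

/-- The equivalence identifying `Fin (2^k) ⊕ Fin (2^k)` with `Fin (2^(k+1))`. -/
def blockEquiv (k : ℕ) : Fin (2 ^ k) ⊕ Fin (2 ^ k) ≃ Fin (2 ^ (k + 1)) :=
  finSumFinEquiv.trans (finCongr (by rw [pow_succ, mul_two]))

/-- The adjacency matrices `A_k`, defined recursively by `A_0 = (0)` and
`A_{k+1} = [[A_k, J_k], [J_k', A_k]]` in block form. -/
noncomputable def Amat : (k : ℕ) → Matrix (Fin (2 ^ k)) (Fin (2 ^ k)) ℝ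
  | 0 => 0
  | (k + 1) => Matrix.reindex (blockEquiv k) (blockEquiv k)
      (Matrix.fromBlocks (Amat k) (Jmat k) (Jmat' k) (Amat k))

/-- `T_k = A_k - λ I`. -/
noncomputable def Tmat (k : ℕ) (l : ℝ) : Matrix (Fin (2 ^ k)) (Fin (2 ^ k)) ℝ :=
  Amat k - l • 1

/-- Characteristic polynomial value `χ_k(λ) = det (A_k - λ I)`. -/
noncomputable def chiA (k : ℕ) (l : ℝ) : ℝ := (Tmat k l).det

/-- Submatrix obtained by deleting the top row and the rightmost column. -/
noncomputable def delTopRight {n : ℕ} (M : Matrix (Fin n) (Fin n) ℝ) :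
    Matrix (Fin (n - 1)) (Fin (n - 1)) ℝ :=
  Matrix.of fun i j => M ⟨i.1 + 1, by have := i.isLt; omega⟩ ⟨j.1, by have := j.isLt; omega⟩

/-- Submatrix obtained by deleting the bottom row and the rightmost column. -/
noncomputable def delBotRight {n : ℕ} (M : Matrix (Fin n) (Fin n) ℝ) :
    Matrix (Fin (n - 1)) (Fin (n - 1)) ℝ :=
  Matrix.of fun i j => M ⟨i.1, by have := i.isLt; omega⟩ ⟨j.1, by have := j.isLt; omega⟩

/-- `φ_k = det Q_k`, where `Q_k` is `T_k` with top row and right column deleted. -/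
noncomputable def phiA (k : ℕ) (l : ℝ) : ℝ := (delTopRight (Tmat k l)).det

/-- `ψ_k = det P_k`, where `P_k` is `T_k` with bottom row and right column deleted. -/
noncomputable def psiA (k : ℕ) (l : ℝ) : ℝ := (delBotRight (Tmat k l)).det

open Matrix

lemma blockEquiv_inl (k : ℕ) (a : Fin (2^k)) : ((blockEquiv k (Sum.inl a)) : ℕ) = a := rfl
lemma blockEquiv_inr (k : ℕ) (a : Fin (2^k)) : ((blockEquiv k (Sum.inr a)) : ℕ) = 2^k + a := rfl

lemma two_pow_succ_fact (k : ℕ) : 2^(k+1) = 2^k + 2^k := by rw [pow_succ, mul_two]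

lemma one_le_two_pow' (k : ℕ) : 1 ≤ 2^k := Nat.one_le_two_pow

lemma blockEquiv_symm_lt (k : ℕ) (i : Fin (2^(k+1))) (h : (i:ℕ) < 2^k) :
    (blockEquiv k).symm i = Sum.inl ⟨i, h⟩ := by
  rw [Equiv.symm_apply_eq]
  exact Fin.ext (blockEquiv_inl k ⟨i, h⟩).symm

lemma blockEquiv_symm_ge (k : ℕ) (i : Fin (2^(k+1))) (h : 2^k ≤ (i:ℕ)) :
    (blockEquiv k).symm i = Sum.inr ⟨i - 2^k, by have := i.isLt; have := two_pow_succ_fact k; omega⟩ := by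
  rw [Equiv.symm_apply_eq]
  refine Fin.ext ?_
  rw [blockEquiv_inr]
  simp only [Fin.val_mk]
  omega

lemma Tmat_succ (k : ℕ) (l : ℝ) :
    Tmat (k+1) l = Matrix.reindex (blockEquiv k) (blockEquiv k)
      (Matrix.fromBlocks (Tmat k l) (Jmat k) (Jmat' k) (Tmat k l)) := by
  have h1 : Tmat k l = Amat k - l • 1 := rfl
  rw [h1]
  show Amat (k+1) - l • 1 = _
  rw [show Amat (k+1) = Matrix.reindex (blockEquiv k) (blockEquiv k)
      (Matrix.fromBlocks (Amat k) (Jmat k) (Jmat' k) (Amat k)) from rfl]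
  have : Matrix.fromBlocks (Amat k - l • 1) (Jmat k) (Jmat' k) (Amat k - l • 1)
      = Matrix.fromBlocks (Amat k) (Jmat k) (Jmat' k) (Amat k) - l • 1 := by
    rw [← Matrix.fromBlocks_one, Matrix.fromBlocks_smul]
    ext i j
    rcases i with a | a <;> rcases j with b | b <;>
      simp [Matrix.fromBlocks, Matrix.sub_apply]
  rw [this]
  simp [Matrix.reindex_apply, Matrix.submatrix_sub, Matrix.submatrix_smul, Matrix.submatrix_one_equiv]

lemma Tmat_succ_ll (k : ℕ) (l : ℝ) (i j : Fin (2^(k+1))) (a b : Fin (2^k))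
    (ha : (i:ℕ) = a) (hb : (j:ℕ) = b) : Tmat (k+1) l i j = Tmat k l a b := by
  rw [Tmat_succ]
  simp only [Matrix.reindex_apply, Matrix.submatrix_apply]
  rw [blockEquiv_symm_lt k i (by omega), blockEquiv_symm_lt k j (by omega)]
  show Tmat k l _ _ = _
  congr 1 <;> exact Fin.ext (by simp only [Fin.val_mk]; omega)

lemma Tmat_succ_lr (k : ℕ) (l : ℝ) (i j : Fin (2^(k+1))) (a b : Fin (2^k))
    (ha : (i:ℕ) = a) (hb : (j:ℕ) = 2^k + b) : Tmat (k+1) l i j = Jmat k a b := by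
  rw [Tmat_succ]
  simp only [Matrix.reindex_apply, Matrix.submatrix_apply]
  rw [blockEquiv_symm_lt k i (by omega), blockEquiv_symm_ge k j (by omega)]
  show Jmat k _ _ = _
  congr 1 <;> exact Fin.ext (by simp only [Fin.val_mk]; omega)

lemma Tmat_succ_rl (k : ℕ) (l : ℝ) (i j : Fin (2^(k+1))) (a b : Fin (2^k))
    (ha : (i:ℕ) = 2^k + a) (hb : (j:ℕ) = b) : Tmat (k+1) l i j = Jmat' k a b := by
  rw [Tmat_succ]
  simp only [Matrix.reindex_apply, Matrix.submatrix_apply]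
  rw [blockEquiv_symm_ge k i (by omega), blockEquiv_symm_lt k j (by omega)]
  show Jmat' k _ _ = _
  congr 1 <;> exact Fin.ext (by simp only [Fin.val_mk]; omega)

lemma Tmat_succ_rr (k : ℕ) (l : ℝ) (i j : Fin (2^(k+1))) (a b : Fin (2^k))
    (ha : (i:ℕ) = 2^k + a) (hb : (j:ℕ) = 2^k + b) : Tmat (k+1) l i j = Tmat k l a b := by
  rw [Tmat_succ]
  simp only [Matrix.reindex_apply, Matrix.submatrix_apply]
  rw [blockEquiv_symm_ge k i (by omega), blockEquiv_symm_ge k j (by omega)]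
  show Tmat k l _ _ = _
  congr 1 <;> exact Fin.ext (by simp only [Fin.val_mk]; omega)

/-- equiv for the ψ recursion -/
def psiEquiv (k : ℕ) : Fin (2^k) ⊕ Fin (2^k - 1) ≃ Fin (2^(k+1) - 1) :=
  finSumFinEquiv.trans (finCongr (by have := one_le_two_pow' k; have := two_pow_succ_fact k; omega))

lemma psiEquiv_inl (k : ℕ) (a : Fin (2^k)) : ((psiEquiv k (Sum.inl a)) : ℕ) = a := rfl
lemma psiEquiv_inr (k : ℕ) (a : Fin (2^k - 1)) : ((psiEquiv k (Sum.inr a)) : ℕ) = 2^k + a := rfl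

lemma psiA_succ (k : ℕ) (l : ℝ) : psiA (k+1) l = chiA k l * psiA k l := by
  have hlt := two_pow_succ_fact (k+1)
  have h1 := one_le_two_pow' k
  unfold psiA chiA
  rw [← Matrix.det_submatrix_equiv_self (psiEquiv k)]
  have key : (delBotRight (Tmat (k+1) l)).submatrix (psiEquiv k) (psiEquiv k)
      = Matrix.fromBlocks (Tmat k l)
          (((delBotRight (Tmat (k+1) l)).submatrix (psiEquiv k) (psiEquiv k)).toBlocks₁₂)
          0 (delBotRight (Tmat k l)) := by
    ext i j
    rcases i with a | a <;> rcases j with b | b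
    · show delBotRight (Tmat (k+1) l) (psiEquiv k (Sum.inl a)) (psiEquiv k (Sum.inl b)) = Tmat k l a b
      show Tmat (k+1) l _ _ = _
      exact Tmat_succ_ll k l _ _ a b rfl rfl
    · rfl
    · show delBotRight (Tmat (k+1) l) (psiEquiv k (Sum.inr a)) (psiEquiv k (Sum.inl b)) = (0 : Matrix _ _ ℝ) a b
      show Tmat (k+1) l _ _ = _
      rw [Tmat_succ_rl k l _ _ ⟨a.1, by omega⟩ b rfl rfl]
      have : (a:ℕ) < 2^k - 1 := a.isLt
      simp [Jmat', Matrix.diagonal_apply]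
      intro h h'
      omega
    · show delBotRight (Tmat (k+1) l) (psiEquiv k (Sum.inr a)) (psiEquiv k (Sum.inr b)) = delBotRight (Tmat k l) a b
      show Tmat (k+1) l _ _ = _
      have ha : (a:ℕ) < 2^k - 1 := a.isLt
      have hb : (b:ℕ) < 2^k - 1 := b.isLt
      exact Tmat_succ_rr k l _ _ ⟨a.1, by omega⟩ ⟨b.1, by omega⟩ rfl rfl
  rw [key, Matrix.det_fromBlocks_zero₂₁]

/-- The bottom-right block in the φ recursion. -/
noncomputable def Rmat (k : ℕ) (l : ℝ) : Matrix (Fin (2^k)) (Fin (2^k)) ℝ :=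
  Matrix.of fun i j => if (j:ℕ) = 0 then (if (i:ℕ) = 2^k - 1 then 1 else 0)
    else Tmat k l i ⟨j - 1, by have := j.isLt; omega⟩

lemma det_Rmat (k : ℕ) (l : ℝ) : (Rmat k l).det = (-1)^(2^k - 1) * psiA k l := by
  have h1 := one_le_two_pow' k
  have h : 2^k = (2^k - 1) + 1 := by omega
  rw [← Matrix.det_submatrix_equiv_self (finCongr h).symm (Rmat k l)]
  rw [Matrix.det_succ_column_zero]
  rw [Finset.sum_eq_single (Fin.last (2^k - 1))]
  · have hentry : ((Rmat k l).submatrix (finCongr h).symm (finCongr h).symm) (Fin.last (2^k-1)) 0 = 1 := by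
      simp [Rmat, Fin.val_last]
    rw [hentry]
    have hsub : ((Rmat k l).submatrix (finCongr h).symm (finCongr h).symm).submatrix
        (Fin.last (2^k-1)).succAbove Fin.succ = delBotRight (Tmat k l) := by
      ext i j
      simp only [Matrix.submatrix_apply, Fin.succAbove_last, Rmat, Matrix.of_apply,
        finCongr_symm, finCongr_apply, Fin.coe_cast, Fin.val_succ, Fin.coe_castSucc,
        delBotRight]
      rw [if_neg (by omega)]
      congr 1
    rw [hsub]
    unfold psiA
    simp [Fin.val_last]
  · intro b _ hb
    have hb' : (b:ℕ) ≠ 2^k - 1 := fun hc => hb (Fin.ext (by simpa using hc))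
    have : ((Rmat k l).submatrix (finCongr h).symm (finCongr h).symm) b 0 = 0 := by
      simp [Rmat, hb']
    rw [this]
    ring
  · intro hmem
    exact absurd (Finset.mem_univ _) hmem

/-- equiv for the φ recursion -/
def phiEquiv (k : ℕ) : Fin (2^k - 1) ⊕ Fin (2^k) ≃ Fin (2^(k+1) - 1) :=
  finSumFinEquiv.trans (finCongr (by have := one_le_two_pow' k; have := two_pow_succ_fact k; omega))

lemma phiA_succ (k : ℕ) (l : ℝ) : phiA (k+1) l = phiA k l * ((-1)^(2^k-1) * psiA k l) := by
  have h1 := one_le_two_pow' k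
  unfold phiA
  rw [← Matrix.det_submatrix_equiv_self (phiEquiv k)]
  have key : (delTopRight (Tmat (k+1) l)).submatrix (phiEquiv k) (phiEquiv k)
      = Matrix.fromBlocks (delTopRight (Tmat k l))
          (((delTopRight (Tmat (k+1) l)).submatrix (phiEquiv k) (phiEquiv k)).toBlocks₁₂)
          0 (Rmat k l) := by
    ext i j
    rcases i with a | a <;> rcases j with b | b
    · show delTopRight (Tmat (k+1) l) (phiEquiv k (Sum.inl a)) (phiEquiv k (Sum.inl b))
        = delTopRight (Tmat k l) a b
      show Tmat (k+1) l _ _ = _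
      have ha : (a:ℕ) < 2^k - 1 := a.isLt
      have hb : (b:ℕ) < 2^k - 1 := b.isLt
      rw [Tmat_succ_ll k l _ _ ⟨a.1 + 1, by omega⟩ ⟨b.1, by omega⟩ rfl rfl]
      rfl
    · rfl
    · show delTopRight (Tmat (k+1) l) (phiEquiv k (Sum.inr a)) (phiEquiv k (Sum.inl b))
        = (0 : Matrix _ _ ℝ) a b
      show Tmat (k+1) l _ _ = _
      have hb : (b:ℕ) < 2^k - 1 := b.isLt
      rw [Tmat_succ_rl k l _ _ a ⟨b.1, by omega⟩ (by show 2^k - 1 + a.1 + 1 = 2^k + a.1; omega) rfl]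
      simp only [Jmat', Matrix.diagonal_apply, Matrix.zero_apply]
      split_ifs with h2 h3
      · exfalso; have := congrArg Fin.val h2; simp at this; omega
      · rfl
      · rfl
    · show delTopRight (Tmat (k+1) l) (phiEquiv k (Sum.inr a)) (phiEquiv k (Sum.inr b))
        = Rmat k l a b
      show Tmat (k+1) l _ _ = _
      by_cases hb0 : (b:ℕ) = 0
      · rw [Tmat_succ_rl k l _ _ a ⟨2^k - 1, by omega⟩
          (by show 2^k - 1 + a.1 + 1 = 2^k + a.1; omega)
          (by show (2^k - 1 + b.1 : ℕ) = 2^k - 1; omega)]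
        show _ = Rmat k l a b
        simp only [Rmat, Matrix.of_apply, if_pos hb0, Jmat', Matrix.diagonal_apply]
        simp only [Fin.ext_iff, Fin.val_mk]
        by_cases hc : (a:ℕ) = 2^k - 1 <;> simp [hc]
      · rw [Tmat_succ_rr k l _ _ a ⟨b.1 - 1, by omega⟩
          (by show 2^k - 1 + a.1 + 1 = 2^k + a.1; omega)
          (by show (2^k - 1 + b.1 : ℕ) = 2^k + (b.1 - 1); omega)]
        show _ = Rmat k l a b
        simp only [Rmat, Matrix.of_apply, if_neg hb0]
  rw [key, Matrix.det_fromBlocks_zero₂₁, det_Rmat]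

lemma psiA_zero (l : ℝ) : psiA 0 l = 1 := by
  unfold psiA
  haveI : IsEmpty (Fin (2^0 - 1)) := ⟨fun i => absurd i.isLt (by norm_num)⟩
  exact Matrix.det_isEmpty

lemma phiA_one (l : ℝ) : phiA 1 l = 1 := by
  unfold phiA
  rw [Matrix.det_fin_one]
  show Tmat 1 l _ _ = 1
  rw [Tmat_succ_rl 0 l _ _ 0 0 rfl rfl]
  simp [Jmat']

lemma psiA_prod (k : ℕ) (l : ℝ) : psiA k l = ∏ i ∈ Finset.range k, chiA i l := by
  induction k with
  | zero => simp [psiA_zero]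
  | succ n ih => rw [psiA_succ, ih, Finset.prod_range_succ]; ring

lemma neg_one_pow_two_pow_sub_one (k : ℕ) (hk : 1 ≤ k) : ((-1 : ℝ))^(2^k - 1) = -1 := by
  rcases k with _ | m
  · omega
  · have h : (2:ℕ)^(m+1) = 2^m * 2 := pow_succ 2 m
    have h1 := one_le_two_pow' m
    have h2 : 2^(m+1) - 1 = 2*(2^m - 1) + 1 := by omega
    rw [h2, pow_succ, pow_mul]
    norm_num

lemma phiA_formula (k : ℕ) (hk : 1 ≤ k) (l : ℝ) :
    phiA k l = (-1 : ℝ) ^ (k - 1) * ∏ i ∈ Finset.range (k - 1), (chiA i l) ^ (k - 1 - i) := by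
  induction k, hk using Nat.le_induction with
  | base => simp [phiA_one]
  | succ n hn ih =>
    obtain ⟨m, rfl⟩ : ∃ m, n = m + 1 := ⟨n - 1, by omega⟩
    rw [phiA_succ, ih, neg_one_pow_two_pow_sub_one _ hn, psiA_prod]
    simp only [Nat.add_sub_cancel]
    have key : ∏ i ∈ Finset.range (m+1), (chiA i l)^(m+1-i)
        = (∏ i ∈ Finset.range m, (chiA i l)^(m-i)) * ∏ i ∈ Finset.range (m+1), chiA i l := by
      have h1 : ∀ i ∈ Finset.range (m+1), (chiA i l)^(m+1-i) = (chiA i l)^(m-i) * chiA i l := by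
        intro i hi
        rw [Finset.mem_range] at hi
        rw [← pow_succ]
        congr 1
        omega
      rw [Finset.prod_congr rfl h1, Finset.prod_mul_distrib]
      congr 1
      rw [Finset.prod_range_succ]
      simp
    rw [key, pow_succ]
    ring


/-- `φ_k = (-1)^(k-1) * ∏_{i=0}^{k-2} (χ_i)^(k-1-i)` for all `k ≥ 2`. -/
theorem phiA_eq_prod (k : ℕ) (hk : 2 ≤ k) (l : ℝ) :
    phiA k l = (-1 : ℝ) ^ (k - 1) * ∏ i ∈ Finset.range (k - 1), (chiA i l) ^ (k - 1 - i) := by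
  exact phiA_formula k (by omega) l
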